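/- With the rerooting operators J^(θ) on 𝕋 defined by J^(θ)(f,ζ) = (f^[θ], ζ^(θ)) (as in the previous statement), for all θ, θ' ∈ [0,1) one has J^(θ) ∘ J^(θ') = J^(θ⊕θ'), where ⊕ is addition mod 1. In particular the operators define a group action of ([0,1), ⊕) on 𝕋. -/

import Mathlib

open Set

/-- Addition modulo 1, for `a = θ + x` with `θ ∈ [0,1)` and `x ∈ [0,1]`. -/
noncomputable def wrap (a : ℝ) : ℝ := if a < 1 then a else a - 1

/-- `ζ̌(x,y) = min{ζ(u) : u ∈ [x∧y, x∨y]}`. -/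
noncomputable def snakeMinOn (ζ : ℝ → ℝ) (x y : ℝ) : ℝ := sInf (ζ '' Set.uIcc x y)

/-- The space `𝕋` of snake tours. -/
def MemSnakeSpace (f ζ : ℝ → ℝ) : Prop :=
  ContinuousOn f (Set.Icc 0 1) ∧ ContinuousOn ζ (Set.Icc 0 1) ∧
  ζ 0 = 0 ∧ ζ 1 = 0 ∧ (∀ x ∈ Set.Icc (0:ℝ) 1, 0 ≤ ζ x) ∧
  f 0 = 0 ∧ f 1 = 0 ∧
  ∀ s ∈ Set.Icc (0:ℝ) 1, ∀ s' ∈ Set.Icc (0:ℝ) 1,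
    ζ s = ζ s' → ζ s = snakeMinOn ζ s s' → f s = f s'

/-- `f^[θ](x) = f(θ⊕x) - f(θ)`. -/
noncomputable def rerootF (f : ℝ → ℝ) (θ : ℝ) : ℝ → ℝ :=
  fun x => f (wrap (θ + x)) - f θ

/-- `ζ^(θ)(x) = ζ(θ⊕x) + ζ(θ) - 2ζ̌(θ⊕x, θ)`. -/
noncomputable def rerootZ (ζ : ℝ → ℝ) (θ : ℝ) : ℝ → ℝ :=
  fun x => ζ (wrap (θ + x)) + ζ θ - 2 * snakeMinOn ζ (wrap (θ + x)) θ

/-!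
Rerooting preserves the tree distance `d_ζ(x,y) = ζ x + ζ y - 2 ζ̌(x,y)`:
`d_{ζ^(c)}(a,b) = d_ζ(c ⊕ a, c ⊕ b)`. Since `ζ^(c)(u) = d_ζ(c ⊕ u, c)`, both components of the
theorem then reduce to the associativity of `⊕`.

The minimum of `ζ^(c)` over `[a,b]` is the distance from `c` to the points `c ⊕ u`,
`u ∈ [a,b]`, which in a tree is the Gromov product `(c ⊕ a | c ⊕ b)_c`. When `c ⊕ [a,b]` is an
interval on one side of `c`, the minimum is attained either at a minimiser of `ζ` there or at
the first point where `ζ` comes down to the level `ζ̌(c, c ⊕ a)`; when `c ⊕ [a,b]` wraps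
around `1` it is the union of two such intervals joined at the root, where `ζ` vanishes.
-/

lemma wrap_of_lt_one {t : ℝ} (h : t < 1) : wrap t = t := if_pos h

lemma wrap_of_one_le {t : ℝ} (h : 1 ≤ t) : wrap t = t - 1 := if_neg h.not_gt

lemma wrap_add_of_one_le {c u : ℝ} (h : 1 ≤ c + u) : wrap (c + u) = c - 1 + u := by
  rw [wrap_of_one_le h]
  ring

lemma wrap_mem_Icc {t : ℝ} (ht : t ∈ Icc (0:ℝ) 1) : wrap t ∈ Icc (0:ℝ) 1 := by
  obtain ⟨ht0, ht1⟩ := ht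
  unfold wrap
  split_ifs <;> constructor <;> linarith

lemma wrap_add_mem_Ico {θ x : ℝ} (hθ : θ ∈ Ico (0:ℝ) 1) (hx : x ∈ Icc (0:ℝ) 1) :
    wrap (θ + x) ∈ Ico (0:ℝ) 1 := by
  obtain ⟨hθ0, hθ1⟩ := hθ
  obtain ⟨hx0, hx1⟩ := hx
  unfold wrap
  split_ifs <;> constructor <;> linarith

lemma wrap_add_wrap_add {θ θ' x : ℝ} (hθ : θ ∈ Ico (0:ℝ) 1) (hθ' : θ' ∈ Ico (0:ℝ) 1)
    (hx : x ∈ Icc (0:ℝ) 1) : wrap (θ + wrap (θ' + x)) = wrap (wrap (θ + θ') + x) := by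
  obtain ⟨hθ0, hθ1⟩ := hθ
  obtain ⟨hθ'0, hθ'1⟩ := hθ'
  obtain ⟨hx0, hx1⟩ := hx
  unfold wrap
  split_ifs <;> linarith

section snakeMinOn

variable {ζ : ℝ → ℝ}

lemma snakeMinOn_comm (ζ : ℝ → ℝ) (x y : ℝ) : snakeMinOn ζ x y = snakeMinOn ζ y x := by
  rw [snakeMinOn, snakeMinOn, uIcc_comm]

lemma isLeast_snakeMinOn {x y : ℝ} (hxy : x ≤ y) (hζ : ContinuousOn ζ (Icc x y)) :
    IsLeast (ζ '' Icc x y) (snakeMinOn ζ x y) := by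
  rw [snakeMinOn, uIcc_of_le hxy]
  exact (isCompact_Icc.image_of_continuousOn hζ).isLeast_sInf ((nonempty_Icc.2 hxy).image ζ)

lemma snakeMinOn_le {x y v : ℝ} (hζ : ContinuousOn ζ (Icc x y)) (hv : v ∈ Icc x y) :
    snakeMinOn ζ x y ≤ ζ v :=
  (isLeast_snakeMinOn (hv.1.trans hv.2) hζ).2 ⟨v, hv, rfl⟩

lemma le_snakeMinOn {x y r : ℝ} (hxy : x ≤ y) (hr : ∀ t ∈ Icc x y, r ≤ ζ t) :
    r ≤ snakeMinOn ζ x y := by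
  rw [snakeMinOn, uIcc_of_le hxy]
  exact le_csInf ((nonempty_Icc.2 hxy).image ζ) (forall_mem_image.2 hr)

lemma snakeMinOn_eq_min {x y z : ℝ} (hxy : x ≤ y) (hyz : y ≤ z)
    (hζ : ContinuousOn ζ (Icc x z)) :
    snakeMinOn ζ x z = min (snakeMinOn ζ x y) (snakeMinOn ζ y z) := by
  refine (isLeast_snakeMinOn (hxy.trans hyz) hζ).unique ?_
  rw [← Icc_union_Icc_eq_Icc hxy hyz, image_union]
  exact (isLeast_snakeMinOn hxy (hζ.mono (Icc_subset_Icc_right hyz))).union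
    (isLeast_snakeMinOn hyz (hζ.mono (Icc_subset_Icc_left hxy)))

lemma snakeMinOn_comp_neg (ζ : ℝ → ℝ) (x y : ℝ) :
    snakeMinOn (fun t => ζ (-t)) x y = snakeMinOn ζ (-x) (-y) := by
  rw [snakeMinOn, snakeMinOn, ← image_neg_uIcc, image_image]

end snakeMinOn

noncomputable def treeDist (ζ : ℝ → ℝ) (x y : ℝ) : ℝ := ζ x + ζ y - 2 * snakeMinOn ζ x y

noncomputable def gromovProduct (ζ : ℝ → ℝ) (c x y : ℝ) : ℝ :=
  (treeDist ζ c x + treeDist ζ c y - treeDist ζ x y) / 2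

lemma treeDist_comm (ζ : ℝ → ℝ) (x y : ℝ) : treeDist ζ x y = treeDist ζ y x := by
  rw [treeDist, treeDist, snakeMinOn_comm, add_comm (ζ x)]

lemma treeDist_comp_neg (ζ : ℝ → ℝ) (x y : ℝ) :
    treeDist (fun t => ζ (-t)) x y = treeDist ζ (-x) (-y) := by
  rw [treeDist, treeDist, snakeMinOn_comp_neg]

lemma rerootZ_eq_treeDist (ζ : ℝ → ℝ) (c u : ℝ) : rerootZ ζ c u = treeDist ζ c (wrap (c + u)) :=
  treeDist_comm ζ _ _

lemma rerootZ_of_one_le_add (ζ : ℝ → ℝ) {c u : ℝ} (hu : 1 ≤ c + u) :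
    rerootZ ζ c u = treeDist ζ c (c - 1 + u) := by
  rw [rerootZ_eq_treeDist, wrap_add_of_one_le hu]

lemma image_rerootZ_of_one_le_add (ζ : ℝ → ℝ) {c a b : ℝ} (ha : 1 ≤ c + a) :
    rerootZ ζ c '' Icc a b = treeDist ζ c '' Icc (c - 1 + a) (c - 1 + b) := by
  rw [← image_const_add_Icc, image_image]
  exact image_congr fun u hu => rerootZ_of_one_le_add ζ (by linarith [hu.1])

lemma treeDist_eq_of_isLeast {g : ℝ → ℝ} {a b D : ℝ} (hab : a ≤ b)
    (h : IsLeast (g '' Icc a b) ((g a + g b - D) / 2)) : treeDist g a b = D := by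
  rw [treeDist, snakeMinOn, uIcc_of_le hab, h.csInf_eq]
  ring

lemma exists_first_hit {ζ : ℝ → ℝ} {a b p : ℝ} (hab : a ≤ b) (hζ : ContinuousOn ζ (Icc a b))
    (hp : p ∈ Icc (ζ b) (ζ a)) : ∃ v ∈ Icc a b, ζ v = p ∧ ∀ t ∈ Icc a v, p ≤ ζ t := by
  set T := Icc a b ∩ ζ ⁻¹' {p}
  have hTclosed : IsClosed T := hζ.preimage_isClosed_of_isClosed isClosed_Icc isClosed_singleton
  have hTne : T.Nonempty := by
    obtain ⟨t, ht, hζt⟩ := intermediate_value_Icc' hab hζ hp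
    exact ⟨t, ht, hζt⟩
  have hTbdd : BddBelow T := ⟨a, fun t ht => ht.1.1⟩
  obtain ⟨hvT, hζv⟩ := hTclosed.csInf_mem hTne hTbdd
  refine ⟨sInf T, hvT, hζv, fun t ht => ?_⟩
  by_contra! hlt
  have htb : t ≤ b := ht.2.trans hvT.2
  obtain ⟨s, hs, hζs⟩ :=
    intermediate_value_Icc' ht.1 (hζ.mono (Icc_subset_Icc_right htb)) ⟨hlt.le, hp.2⟩
  have hvs : sInf T ≤ s := csInf_le hTbdd ⟨⟨hs.1, hs.2.trans htb⟩, hζs⟩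
  have hts : t = s := le_antisymm (ht.2.trans hvs) hs.2
  rw [hts, hζs] at hlt
  exact lt_irrefl p hlt

lemma isLeast_treeDist_image_Icc_of_le {ζ : ℝ → ℝ} {c x y : ℝ} (hcx : c ≤ x) (hxy : x ≤ y)
    (hζ : ContinuousOn ζ (Icc c y)) :
    IsLeast (treeDist ζ c '' Icc x y) (gromovProduct ζ c x y) := by
  set p := snakeMinOn ζ c x
  set q := snakeMinOn ζ x y
  have hζxy : ContinuousOn ζ (Icc x y) := hζ.mono (Icc_subset_Icc_left hcx)
  have hsplit : ∀ v ∈ Icc x y, snakeMinOn ζ c v = min p (snakeMinOn ζ x v) := fun v hv =>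
    snakeMinOn_eq_min hcx hv.1 (hζ.mono (Icc_subset_Icc_right hv.2))
  have hq : ∀ v ∈ Icc x y, q ≤ snakeMinOn ζ x v := fun v hv =>
    (snakeMinOn_eq_min hv.1 hv.2 hζxy).trans_le (min_le_left _ _)
  have hval : ∀ v ∈ Icc x y, treeDist ζ c v = ζ c + ζ v - 2 * min p (snakeMinOn ζ x v) :=
    fun v hv => by rw [treeDist, hsplit v hv]
  have hgromov : gromovProduct ζ c x y = ζ c + q - p - min p q := by
    rw [gromovProduct, hval y ⟨hxy, le_rfl⟩, treeDist, treeDist]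
    ring
  obtain ⟨w, hw, hζw⟩ := (isLeast_snakeMinOn hxy hζxy).1
  refine ⟨?_, ?_⟩
  · rcases le_total p q with hpq | hqp
    · refine ⟨w, hw, ?_⟩
      rw [hval w hw, min_eq_left (hpq.trans (hq w hw)), hgromov, min_eq_left hpq, hζw]
      ring
    · -- `q ≤ p ≤ ζ x`: hit the level `p` between `x` and the minimiser `w`
      have hpx : p ≤ ζ x := snakeMinOn_le (hζ.mono (Icc_subset_Icc_right hxy)) ⟨hcx, le_rfl⟩
      obtain ⟨v, hv, hζv, hfirst⟩ := exists_first_hit hw.1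
        (hζxy.mono (Icc_subset_Icc_right hw.2)) ⟨hζw ▸ hqp, hpx⟩
      have hvxy : v ∈ Icc x y := ⟨hv.1, hv.2.trans hw.2⟩
      refine ⟨v, hvxy, ?_⟩
      rw [hval v hvxy, min_eq_left (le_snakeMinOn hv.1 hfirst), hgromov, min_eq_right hqp, hζv]
      ring
  · rintro _ ⟨v, hv, rfl⟩
    have hqv := hq v hv
    have hvζ : snakeMinOn ζ x v ≤ ζ v :=
      snakeMinOn_le (hζxy.mono (Icc_subset_Icc_right hv.2)) ⟨hv.1, le_rfl⟩
    rw [hval v hv, hgromov]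
    rcases min_cases p (snakeMinOn ζ x v) with h | h <;>
      rcases min_cases p q with h' | h' <;> linarith

lemma isLeast_treeDist_image_Icc_of_ge {ζ : ℝ → ℝ} {c x y : ℝ} (hxy : x ≤ y) (hyc : y ≤ c)
    (hζ : ContinuousOn ζ (Icc x c)) :
    IsLeast (treeDist ζ c '' Icc x y) (gromovProduct ζ c x y) := by
  have hζneg : ContinuousOn (fun t => ζ (-t)) (Icc (-c) (-x)) :=
    hζ.comp continuousOn_neg fun t ht => ⟨le_neg.1 ht.2, neg_le.1 ht.1⟩
  have himage : treeDist ζ c '' Icc x y = treeDist (fun t => ζ (-t)) (-c) '' Icc (-y) (-x) := by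
    rw [show Icc x y = Neg.neg '' Icc (-y) (-x) by rw [image_neg_Icc, neg_neg, neg_neg],
      image_image]
    simp only [treeDist_comp_neg, neg_neg]
  have hvalue : gromovProduct ζ c x y = gromovProduct (fun t => ζ (-t)) (-c) (-y) (-x) := by
    simp only [gromovProduct, treeDist_comp_neg, neg_neg, treeDist_comm ζ y x]
    ring
  rw [himage, hvalue]
  exact isLeast_treeDist_image_Icc_of_le (neg_le_neg hyc) (neg_le_neg hxy) hζneg

structure IsExcursion (ζ : ℝ → ℝ) : Prop where
  continuousOn : ContinuousOn ζ (Icc 0 1)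
  zero : ζ 0 = 0
  one : ζ 1 = 0
  nonneg : ∀ x ∈ Icc (0:ℝ) 1, 0 ≤ ζ x

lemma MemSnakeSpace.isExcursion {f ζ : ℝ → ℝ} (h : MemSnakeSpace f ζ) : IsExcursion ζ :=
  ⟨h.2.1, h.2.2.1, h.2.2.2.1, h.2.2.2.2.1⟩

namespace IsExcursion

variable {ζ : ℝ → ℝ}

lemma snakeMinOn_zero_left (hζ : IsExcursion ζ) {t : ℝ} (ht : t ∈ Icc (0:ℝ) 1) :
    snakeMinOn ζ 0 t = 0 :=
  le_antisymm
    ((snakeMinOn_le (hζ.continuousOn.mono (Icc_subset_Icc_right ht.2)) ⟨le_rfl, ht.1⟩).trans_eq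
      hζ.zero)
    (le_snakeMinOn ht.1 fun s hs => hζ.nonneg s ⟨hs.1, hs.2.trans ht.2⟩)

lemma snakeMinOn_one_right (hζ : IsExcursion ζ) {t : ℝ} (ht : t ∈ Icc (0:ℝ) 1) :
    snakeMinOn ζ t 1 = 0 :=
  le_antisymm
    ((snakeMinOn_le (hζ.continuousOn.mono (Icc_subset_Icc_left ht.1)) ⟨ht.2, le_rfl⟩).trans_eq
      hζ.one)
    (le_snakeMinOn ht.2 fun s hs => hζ.nonneg s ⟨ht.1.trans hs.1, hs.2⟩)

lemma treeDist_zero_left (hζ : IsExcursion ζ) {t : ℝ} (ht : t ∈ Icc (0:ℝ) 1) :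
    treeDist ζ 0 t = ζ t := by
  rw [treeDist, hζ.snakeMinOn_zero_left ht, hζ.zero]
  ring

lemma treeDist_one_right (hζ : IsExcursion ζ) {t : ℝ} (ht : t ∈ Icc (0:ℝ) 1) :
    treeDist ζ t 1 = ζ t := by
  rw [treeDist, hζ.snakeMinOn_one_right ht, hζ.one]
  ring

lemma treeDist_wrap_of_le_one (hζ : IsExcursion ζ) {p t : ℝ} (hp : p ∈ Icc (0:ℝ) 1)
    (ht : t ≤ 1) : treeDist ζ p (wrap t) = treeDist ζ p t := by
  rcases ht.lt_or_eq with ht | rfl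
  · rw [wrap_of_lt_one ht]
  · rw [wrap_of_one_le le_rfl, sub_self, treeDist_comm, hζ.treeDist_zero_left hp,
      hζ.treeDist_one_right hp]

lemma rerootZ_of_add_le_one (hζ : IsExcursion ζ) {c u : ℝ} (hc : c ∈ Icc (0:ℝ) 1)
    (hu : c + u ≤ 1) : rerootZ ζ c u = treeDist ζ c (c + u) := by
  rw [rerootZ_eq_treeDist, hζ.treeDist_wrap_of_le_one hc hu]

lemma image_rerootZ_of_add_le_one (hζ : IsExcursion ζ) {c a b : ℝ} (hc : c ∈ Icc (0:ℝ) 1)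
    (hb : c + b ≤ 1) : rerootZ ζ c '' Icc a b = treeDist ζ c '' Icc (c + a) (c + b) := by
  rw [← image_const_add_Icc, image_image]
  exact image_congr fun u hu => hζ.rerootZ_of_add_le_one hc (by linarith [hu.2])

-- A path from `y ≤ c` to `x ≥ c` that wraps around `1` passes through the root `0 ~ 1`.
lemma gromovProduct_eq_min (hζ : IsExcursion ζ) {c x y : ℝ} (hy : 0 ≤ y) (hyc : y ≤ c)
    (hcx : c ≤ x) (hx : x ≤ 1) :
    gromovProduct ζ c x y = min (gromovProduct ζ c x 1) (gromovProduct ζ c 0 y) := by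
  have hc : c ∈ Icc (0:ℝ) 1 := ⟨hy.trans hyc, hcx.trans hx⟩
  have hsplit : snakeMinOn ζ y x = min (snakeMinOn ζ y c) (snakeMinOn ζ c x) :=
    snakeMinOn_eq_min hyc hcx (hζ.continuousOn.mono (Icc_subset_Icc hy hx))
  rw [gromovProduct, gromovProduct, gromovProduct, hζ.treeDist_one_right hc,
    hζ.treeDist_one_right ⟨hc.1.trans hcx, hx⟩, treeDist_comm ζ c 0, hζ.treeDist_zero_left hc,
    hζ.treeDist_zero_left ⟨hy, hyc.trans hc.2⟩]
  simp only [treeDist]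
  rw [snakeMinOn_comm ζ x y, hsplit, snakeMinOn_comm ζ c y]
  rcases le_total (snakeMinOn ζ y c) (snakeMinOn ζ c x) with h | h
  · rw [min_eq_left h, min_eq_left (by linarith)]
    ring
  · rw [min_eq_right h, min_eq_right (by linarith)]
    ring

lemma treeDist_wrap_wrap (hζ : IsExcursion ζ) {x y : ℝ} (hx : x ∈ Icc (0:ℝ) 1)
    (hy : y ∈ Icc (0:ℝ) 1) : treeDist ζ (wrap x) (wrap y) = treeDist ζ x y := by
  rw [hζ.treeDist_wrap_of_le_one (wrap_mem_Icc hx) hy.2, treeDist_comm,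
    hζ.treeDist_wrap_of_le_one hy hx.2, treeDist_comm]

lemma treeDist_rerootZ_of_le (hζ : IsExcursion ζ) {c a b : ℝ} (hc : c ∈ Icc (0:ℝ) 1)
    (ha : 0 ≤ a) (hab : a ≤ b) (hb : b ≤ 1) :
    treeDist (rerootZ ζ c) a b = treeDist ζ (wrap (c + a)) (wrap (c + b)) := by
  obtain ⟨hc0, hc1⟩ := id hc
  refine treeDist_eq_of_isLeast hab ?_
  rcases le_total (c + b) 1 with hcb | hcb
  · have hca : c + a ≤ 1 := by linarith
    rw [hζ.image_rerootZ_of_add_le_one hc hcb, hζ.rerootZ_of_add_le_one hc hca,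
      hζ.rerootZ_of_add_le_one hc hcb, hζ.treeDist_wrap_wrap ⟨by linarith, hca⟩ ⟨by linarith, hcb⟩]
    exact isLeast_treeDist_image_Icc_of_le (by linarith) (by linarith)
      (hζ.continuousOn.mono (Icc_subset_Icc hc0 hcb))
  rcases le_total 1 (c + a) with hca | hca
  · rw [image_rerootZ_of_one_le_add ζ hca, rerootZ_of_one_le_add ζ hca,
      rerootZ_of_one_le_add ζ hcb, wrap_add_of_one_le hca, wrap_add_of_one_le hcb]
    exact isLeast_treeDist_image_Icc_of_ge (by linarith) (by linarith)
      (hζ.continuousOn.mono (Icc_subset_Icc (by linarith) hc1))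
  · have himage : rerootZ ζ c '' Icc a b =
        treeDist ζ c '' Icc (c + a) 1 ∪ treeDist ζ c '' Icc 0 (c - 1 + b) := by
      rw [← Icc_union_Icc_eq_Icc (by linarith : a ≤ 1 - c) (by linarith : 1 - c ≤ b),
        image_union, hζ.image_rerootZ_of_add_le_one hc (by linarith : c + (1 - c) ≤ 1),
        image_rerootZ_of_one_le_add ζ (by linarith : 1 ≤ c + (1 - c)), add_sub_cancel,
        show c - 1 + (1 - c) = 0 by ring]
    have hdist : treeDist ζ (wrap (c + a)) (wrap (c + b)) = treeDist ζ (c + a) (c - 1 + b) := by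
      rw [wrap_add_of_one_le hcb, treeDist_comm,
        hζ.treeDist_wrap_of_le_one ⟨by linarith, by linarith⟩ hca, treeDist_comm]
    rw [himage, hζ.rerootZ_of_add_le_one hc hca, rerootZ_of_one_le_add ζ hcb, hdist,
      ← gromovProduct, hζ.gromovProduct_eq_min (by linarith) (by linarith) (by linarith) hca]
    exact (isLeast_treeDist_image_Icc_of_le (by linarith) hca
      (hζ.continuousOn.mono (Icc_subset_Icc hc0 le_rfl))).union
      (isLeast_treeDist_image_Icc_of_ge (by linarith) (by linarith)
        (hζ.continuousOn.mono (Icc_subset_Icc le_rfl hc1)))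

lemma treeDist_rerootZ (hζ : IsExcursion ζ) {c a b : ℝ} (hc : c ∈ Icc (0:ℝ) 1)
    (ha : a ∈ Icc (0:ℝ) 1) (hb : b ∈ Icc (0:ℝ) 1) :
    treeDist (rerootZ ζ c) a b = treeDist ζ (wrap (c + a)) (wrap (c + b)) := by
  rcases le_total a b with hab | hba
  · exact hζ.treeDist_rerootZ_of_le hc ha.1 hab hb.2
  · rw [treeDist_comm, hζ.treeDist_rerootZ_of_le hc hb.1 hba ha.2, treeDist_comm]

end IsExcursion

/-- The rerooting operators form a group action of `([0,1), ⊕)` on `𝕋`: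
`J^(θ) ∘ J^(θ') = J^(θ⊕θ')`, i.e. rerooting first at `θ'` and then at `θ` is rerooting at
`θ ⊕ θ'` (on `[0,1]`, where the functions are defined). -/
theorem reroot_group_action (f ζ : ℝ → ℝ) (θ θ' : ℝ)
    (hθ : θ ∈ Set.Ico (0:ℝ) 1) (hθ' : θ' ∈ Set.Ico (0:ℝ) 1)
    (h : MemSnakeSpace f ζ) :
    ∀ x ∈ Set.Icc (0:ℝ) 1,
      rerootF (rerootF f θ') θ x = rerootF f (wrap (θ + θ')) x ∧
      rerootZ (rerootZ ζ θ') θ x = rerootZ ζ (wrap (θ + θ')) x := by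
  intro x hx
  have hassoc : wrap (θ' + wrap (θ + x)) = wrap (wrap (θ + θ') + x) := by
    rw [wrap_add_wrap_add hθ' hθ hx, add_comm θ' θ]
  constructor
  · simp only [rerootF]
    rw [hassoc, add_comm θ' θ]
    ring
  · calc rerootZ (rerootZ ζ θ') θ x
        = treeDist (rerootZ ζ θ') (wrap (θ + x)) θ := rfl
      _ = treeDist ζ (wrap (θ' + wrap (θ + x))) (wrap (θ' + θ)) :=
        h.isExcursion.treeDist_rerootZ (Ico_subset_Icc_self hθ')
          (Ico_subset_Icc_self (wrap_add_mem_Ico hθ hx)) (Ico_subset_Icc_self hθ)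
      _ = rerootZ ζ (wrap (θ + θ')) x := by rw [hassoc, add_comm θ' θ]; rfl
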